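/- arXiv:0711.2503 — 2 statements merged into one kernel-verified Lean document; each statement's English description precedes it below -/
import Mathlib

section
/- For m ∈ ℕ, m ≥ 1, and real z > 0 define G_{2m}(z) = z^{−2m} · Σ_{s=1}^{m} d₂(2m,s) z^s. Let α ∈ (0,1), z > 0, and set m_z = ⌊αز/4⌋ (the floor of αz/4). If m_z ≥ 1, then G_{2m_z}(z) ≤ α^{m_z} / (4(1−α)). -/
/-!
Since `G_{2m}(z) = ∑_{s=1}^m d₂(2m,s) z^{-(2m-s)}`, everything follows from
`4 d₂(2m,s) ≤ (4m)^{2m-s}`: as `4m/z ≤ α`, the `s`-th term is then at most `α^{2m-s}/4`, and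
`∑_{s=1}^m α^{2m-s} ≤ α^m/(1-α)`.

For the combinatorial bound, a fixed-point-free permutation `σ` with `s` cycles is determined by the
set `S` of its cycle minima, by `σ⁻¹` on `S` (an injection into `Sᶜ`) and by `σ` on the `n - 2s`
points of `Sᶜ` not sent into `S` (again into `Sᶜ`): `σ` on `S` is recovered by following each cycle
back to its minimum. Counting these data gives `s! d₂(n,s) ≤ n! C(n-s,s)`, and for `n = 2m` the
right-hand side is at most `n! 2^{n-s}`, which `4 (2m)! ≤ m! (2m)^m` (for `m ≥ 6`) turns into the
claim; small `m` are checked directly.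
-/

open MeasureTheory Complex Matrix

noncomputable section

/-- The time-frequency shift `π(λ) = M_ℓ T_k` applied to a window `g ∈ ℂ^n`:
`(π(k,ℓ)g)_q = e^{2πiℓq/n} g_{(k+q) mod n}`. -/
def tfShift (n : ℕ) (lam : Fin n × Fin n) (g : Fin n → ℂ) : Fin n → ℂ :=
  fun q => Complex.exp (2 * Real.pi * Complex.I * (lam.2 : ℕ) * (q : ℕ) / n) * g (lam.1 + q)

/-- The time-frequency shift `π(λ) = M_ℓ T_k` as an `n × n` matrix. -/
def tfMatrix (n : ℕ) (lam : Fin n × Fin n) : Matrix (Fin n) (Fin n) ℂ :=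
  Matrix.of fun q p =>
    if p = lam.1 + q then Complex.exp (2 * Real.pi * Complex.I * (lam.2 : ℕ) * (q : ℕ) / n) else 0

/-- The Gabor synthesis matrix `Ψ_g ∈ ℂ^{n × n²}`, columns `π(λ)g`. -/
def gaborMatrix (n : ℕ) (g : Fin n → ℂ) : Matrix (Fin n) (Fin n × Fin n) ℂ :=
  Matrix.of fun q lam => tfShift n lam g q

/-- The column submatrix of a matrix, columns restricted to a finite index set `Λ`. -/
def colSub {ι κ : Type*} (A : Matrix ι κ ℂ) (Λ : Finset κ) : Matrix ι ↥Λ ℂ :=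
  Matrix.of fun i j => A i (j : κ)

/-- The column submatrix `Ψ_Λ` of the Gabor synthesis matrix. -/
def gaborSub (n : ℕ) (g : Fin n → ℂ) (Λ : Finset (Fin n × Fin n)) : Matrix (Fin n) ↥Λ ℂ :=
  colSub (gaborMatrix n g) Λ

/-- The ℓ¹ norm of a vector in `ℂ^ι`. -/
def l1norm {ι : Type*} [Fintype ι] (z : ι → ℂ) : ℝ := ∑ i, ‖z i‖

/-- The ℓ² (Euclidean) norm of a vector in `ℂ^ι`. -/
def l2norm {ι : Type*} [Fintype ι] (z : ι → ℂ) : ℝ := Real.sqrt (∑ i, ‖z i‖ ^ 2)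

/-- The standard Hermitian inner product `⟨u,v⟩ = ∑ u_i conj(v_i)` on `ℂ^ι`. -/
def dotc {ι : Type*} [Fintype ι] (u v : ι → ℂ) : ℂ := ∑ i, u i * (starRingEnd ℂ) (v i)

/-- `x` is the unique minimizer of the ℓ¹ norm among all `z` with `A z = A x`
(Basis Pursuit recovers `x` from `y = A x`). -/
def BPrecovers {ι κ : Type*} [Fintype ι] [Fintype κ] (A : Matrix ι κ ℂ) (x : κ → ℂ) : Prop :=
  ∀ z : κ → ℂ, A.mulVec z = A.mulVec x → z ≠ x → l1norm x < l1norm z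

/-- The spectral norm (`ℓ² → ℓ²` operator norm) of a complex matrix. -/
def specNorm {ι κ : Type*} [Fintype ι] [Fintype κ] [DecidableEq κ] (A : Matrix ι κ ℂ) : ℝ :=
  ‖LinearMap.toContinuousLinearMap (Matrix.toEuclideanLin A)‖

/-- The Frobenius norm of a complex matrix. -/
def frobNorm {ι κ : Type*} [Fintype ι] [Fintype κ] (A : Matrix ι κ ℂ) : ℝ :=
  Real.sqrt (∑ i, ∑ j, ‖A i j‖ ^ 2)

/-- The complex sign: `sgn(z) = z/|z|` for `z ≠ 0`, and `sgn(0) = 0`. -/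
def csgn (z : ℂ) : ℂ := if z = 0 then 0 else z / (‖z‖ : ℂ)

/-- The associated Stirling number of the first kind `d₂(m,s)`: the number of permutations
of an `m`-element set consisting of exactly `s` disjoint cycles, each of length at least 2
(equivalently, fixed-point-free permutations of `Fin m` with exactly `s` cycles). -/
def d2 (m s : ℕ) : ℕ :=
  Fintype.card {σ : Equiv.Perm (Fin m) // σ.cycleType.card = s ∧ σ.cycleType.sum = m}

instance : MeasurableSpace Circle := borel Circle
instance : BorelSpace Circle := ⟨rfl⟩

/-- The normalized Haar (uniform) probability measure on the circle group
`{z ∈ ℂ : |z| = 1}`. -/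
def circleHaar : Measure Circle :=
  Measure.haarMeasure (⊤ : TopologicalSpace.PositiveCompacts Circle)

instance : IsProbabilityMeasure circleHaar :=
  ⟨by simpa [circleHaar] using Measure.haarMeasure_self (K₀ := (⊤ : TopologicalSpace.PositiveCompacts Circle))⟩

/-- The random unimodular window `g^R_q = ε_q/√n` determined by the phases `ε : Fin n → Circle`. -/
def windowR (n : ℕ) (ε : Fin n → Circle) : Fin n → ℂ :=
  fun q => (ε q : ℂ) / Real.sqrt n

/-- The distribution of `n` independent Haar-uniform points on the circle
(the law of the random phases `ε_0, …, ε_{n-1}`). -/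
def Pmeas (n : ℕ) : Measure (Fin n → Circle) := Measure.pi fun _ => circleHaar

/-- The extension-by-zero matrix `E_Λ : ℂ^Λ → ℂ^κ`. -/
def extMat {κ : Type*} [DecidableEq κ] (Λ : Finset κ) : Matrix κ ↥Λ ℂ :=
  Matrix.of fun j lam => if j = (lam : κ) then 1 else 0

/-- Pad a matrix with columns indexed by `Λ` to one with columns indexed by all of `κ`,
filling with zero columns: the matrix `K R_Λ` where `R_Λ` is the restriction operator. -/
def padCols {ι κ : Type*} [DecidableEq κ] {Λ : Finset κ} (K : Matrix ι ↥Λ ℂ) : Matrix ι κ ℂ :=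
  Matrix.of fun i j => if h : j ∈ Λ then K i ⟨j, h⟩ else 0

end

/-- The auxiliary function `G_{2m}(z) = z^{-2m} ∑_{s=1}^m d₂(2m,s) z^s`. -/
noncomputable def G2m (m : ℕ) (z : ℝ) : ℝ :=
  z ^ (-(2 * m : ℤ)) * ∑ s ∈ Finset.Icc 1 m, (d2 (2 * m) s : ℝ) * z ^ s

open Finset

namespace Equiv.Perm

theorem pow_apply_eq_pow_apply_of_eqOn_compl {α : Type*} {σ τ : Perm α}
    {S : Set α} (hστ : ∀ x ∉ S, σ x = τ x) {x : α} {k : ℕ}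
    (hk : ∀ j < k, (τ ^ j) x ∉ S) : (σ ^ k) x = (τ ^ k) x := by
  induction k with
  | zero => rfl
  | succ k ih =>
    rw [pow_succ', pow_succ', mul_apply, mul_apply, ih fun j hj => hk j (by omega),
      hστ _ (hk k k.lt_succ_self)]

variable {α : Type*} [Fintype α] [LinearOrder α] {s : ℕ} {σ τ : Perm α} {x y : α}

def cycleMinima (σ : Perm α) : Finset α := {x | ∀ y, σ.SameCycle x y → x ≤ y}

theorem mem_cycleMinima : x ∈ σ.cycleMinima ↔ ∀ y, σ.SameCycle x y → x ≤ y := by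
  simp [cycleMinima]

theorem SameCycle.eq_of_mem_cycleMinima (h : σ.SameCycle x y) (hx : x ∈ σ.cycleMinima)
    (hy : y ∈ σ.cycleMinima) : x = y :=
  le_antisymm (mem_cycleMinima.mp hx y h) (mem_cycleMinima.mp hy x h.symm)

theorem exists_mem_cycleMinima_sameCycle (σ : Perm α) (x : α) :
    ∃ y ∈ σ.cycleMinima, σ.SameCycle x y := by
  obtain ⟨y, hy, hmin⟩ :=
    exists_min_image {y | σ.SameCycle x y} id ⟨x, by simp [SameCycle.refl]⟩
  rw [mem_filter_univ] at hy
  exact ⟨y, mem_cycleMinima.mpr fun z hz => hmin z (by simpa using hy.trans hz), hy⟩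

theorem card_cycleMinima (hσ : σ ∈ derangements α) :
    #σ.cycleMinima = Multiset.card σ.cycleType := by
  rw [cycleType_def, Multiset.card_map]
  refine card_bij (fun a _ => σ.cycleOf a) (fun a _ => ?_) (fun a ha b hb hab => ?_)
    (fun c hc => ?_)
  · exact cycleOf_mem_cycleFactorsFinset_iff.mpr (mem_support.mpr (hσ a))
  · have hb' : b ∈ (σ.cycleOf a).support :=
      hab ▸ mem_support_cycleOf_iff.mpr ⟨SameCycle.refl _ _, mem_support.mpr (hσ b)⟩
    exact (mem_support_cycleOf_iff.mp hb').1.eq_of_mem_cycleMinima ha hb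
  · obtain ⟨x, hx, -⟩ := (mem_cycleFactorsFinset_iff.mp hc).1
    obtain ⟨y, hy, hxy⟩ := exists_mem_cycleMinima_sameCycle σ x
    exact ⟨y, hy, hxy.cycleOf_eq ▸ (cycle_is_cycleOf (mem_support.mpr hx) hc).symm⟩

theorem inv_apply_notMem_cycleMinima (hσ : σ ∈ derangements α) (hx : x ∈ σ.cycleMinima) :
    σ⁻¹ x ∉ σ.cycleMinima := fun h => by
  have hfix : σ⁻¹ x = x :=
    (sameCycle_symm_apply_left.mpr (SameCycle.refl σ x)).eq_of_mem_cycleMinima h hx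
  exact hσ x (by simpa using (congrArg σ hfix).symm)

/-- A permutation is determined by its cycle minima and its values off them: the image of a
minimum `m` is the unique point from which the path along the other values first returns to
the cycle minima at `m`. -/
theorem eq_of_cycleMinima_eq (h : σ.cycleMinima = τ.cycleMinima)
    (hστ : ∀ x ∉ σ.cycleMinima, σ x = τ x) : σ = τ := by
  classical
  ext m
  by_cases hm : m ∈ σ.cycleMinima
  swap
  · exact hστ m hm
  set m' := τ⁻¹ (σ m)
  have hτm' : τ m' = σ m := by simp [m']
  have hm' : m' ∈ σ.cycleMinima := by
    by_contra hm'
    exact hm' (σ.injective ((hστ m' hm').trans hτm') ▸ hm)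
  have hcyc : τ.SameCycle (σ m) m' := hτm' ▸ sameCycle_apply_left.mpr (SameCycle.refl τ m')
  have hex : ∃ k, (τ ^ k) (σ m) = m' :=
    let ⟨k, _, hk⟩ := hcyc.exists_pow_eq'
    ⟨k, hk⟩
  have hpath : (σ ^ Nat.find hex) (σ m) = m' := by
    rw [pow_apply_eq_pow_apply_of_eqOn_compl (S := (σ.cycleMinima : Set α)) hστ, Nat.find_spec hex]
    intro j hj hmem
    exact Nat.find_min hex hj
      ((sameCycle_pow_left.mpr hcyc).eq_of_mem_cycleMinima (h ▸ hmem) (h ▸ hm'))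
  have hmm' : m = m' := by
    refine (sameCycle_apply_left.mp ?_).eq_of_mem_cycleMinima hm hm'
    exact hpath ▸ sameCycle_pow_right.mpr (SameCycle.refl σ (σ m))
  rw [← hτm', ← hmm']

def cycleLast (hσ : σ ∈ derangements α) : σ.cycleMinima ↪ ↥(σ.cycleMinimaᶜ) where
  toFun a := ⟨σ⁻¹ a, mem_compl.2 (inv_apply_notMem_cycleMinima hσ a.2)⟩
  inj' _ _ h := Subtype.ext (σ⁻¹.injective (congrArg Subtype.val h))

theorem mem_map_cycleLast (hσ : σ ∈ derangements α) {x : α} (hx : x ∈ σ.cycleMinimaᶜ) :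
    ⟨x, hx⟩ ∈ univ.map (cycleLast hσ) ↔ σ x ∈ σ.cycleMinima := by
  refine ⟨fun h => ?_, fun h =>
    mem_map.2 ⟨⟨σ x, h⟩, mem_univ _, Subtype.ext (by simp [cycleLast])⟩⟩
  obtain ⟨a, -, ha⟩ := mem_map.1 h
  have : σ⁻¹ a = x := congrArg Subtype.val ha
  exact this ▸ (by simp [a.2])

def restrictNotLast (hσ : σ ∈ derangements α) :
    ↥((univ.map (cycleLast hσ))ᶜ) ↪ ↥(σ.cycleMinimaᶜ) where
  toFun x := ⟨σ x.1, mem_compl.2 fun h => mem_compl.1 x.2 ((mem_map_cycleLast hσ x.1.2).2 h)⟩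
  inj' _ _ h := Subtype.ext (Subtype.ext (σ.injective (congrArg Subtype.val h)))

variable (α s) in
/-- A derangement with `s` cycles is encoded by its set `S` of cycle minima, by `σ⁻¹` on `S`
(the last points of the cycles) and by `σ` on the points of `Sᶜ` that are not last points. -/
abbrev DerangementCode :=
  Σ S : {S : Finset α // #S = s}, Σ last : (S.1 ↪ ↥(S.1ᶜ)), (↥((univ.map last)ᶜ) ↪ ↥(S.1ᶜ))

namespace DerangementCode

/-- Codes are compared through this function, which avoids comparing their dependent components;
on the last points, where a code records nothing, it is the identity. -/
def decode (t : DerangementCode α s) (x : α) : α :=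
  if hx : x ∈ t.1.1 then t.2.1 ⟨x, hx⟩
  else if hl : ⟨x, mem_compl.2 hx⟩ ∉ univ.map t.2.1 then
    t.2.2 ⟨⟨x, mem_compl.2 hx⟩, mem_compl.2 hl⟩
  else x

theorem card : Fintype.card (DerangementCode α s) =
    (Fintype.card α).choose s *
      ((Fintype.card α - s).descFactorial s * (Fintype.card α - s).descFactorial
        (Fintype.card α - 2 * s)) := by
  set n := Fintype.card α
  rw [Fintype.card_sigma, sum_const_nat (m := (n - s).descFactorial s * (n - s).descFactorial
    (n - 2 * s)) fun S _ => ?_, card_univ, Fintype.card_finset_len]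
  obtain ⟨S, rfl⟩ := S
  rw [Fintype.card_sigma, sum_const_nat (m := (n - #S).descFactorial (n - 2 * #S))
    fun last _ => ?_, card_univ, Fintype.card_embedding_eq]
  · simp [n]
  · rw [Fintype.card_embedding_eq, Fintype.card_coe, Fintype.card_coe, card_compl, card_compl,
      card_map, card_univ, Fintype.card_coe, Fintype.card_coe, card_compl, Nat.sub_sub, ← two_mul]

def encode (σ : {σ : Perm α // σ ∈ derangements α ∧ Multiset.card σ.cycleType = s}) :
    DerangementCode α s :=
  ⟨⟨σ.1.cycleMinima, (card_cycleMinima σ.2.1).trans σ.2.2⟩, cycleLast σ.2.1,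
    restrictNotLast σ.2.1⟩

variable {σ : {σ : Perm α // σ ∈ derangements α ∧ Multiset.card σ.cycleType = s}} {x : α}

theorem decode_encode_of_mem (hx : x ∈ σ.1.cycleMinima) : (encode σ).decode x = σ.1⁻¹ x :=
  dif_pos hx

theorem decode_encode_of_notMem (hx : x ∉ σ.1.cycleMinima) (hσx : σ.1 x ∉ σ.1.cycleMinima) :
    (encode σ).decode x = σ.1 x :=
  (dif_neg hx).trans (dif_pos ((mem_map_cycleLast σ.2.1 _).not.2 hσx))

theorem encode_injective : Function.Injective (encode (α := α) (s := s)) := by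
  rintro ⟨σ, hσ⟩ ⟨τ, hτ⟩ h
  have hS : σ.cycleMinima = τ.cycleMinima := congrArg (fun t => t.1.1) h
  have hdec := congrArg decode h
  have hinv : ∀ y ∈ σ.cycleMinima, σ⁻¹ y = τ⁻¹ y := fun y hy => by
    rw [← decode_encode_of_mem (σ := ⟨σ, hσ⟩) hy, hdec,
      decode_encode_of_mem (σ := ⟨τ, hτ⟩) (hS ▸ hy)]
  refine Subtype.ext (eq_of_cycleMinima_eq hS fun x hx => ?_)
  by_cases hσx : σ x ∈ σ.cycleMinima
  · simpa using (congrArg τ (hinv _ hσx)).symm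
  by_cases hτx : τ x ∈ σ.cycleMinima
  · simpa using (congrArg σ (hinv _ hτx)).symm
  rw [← decode_encode_of_notMem (σ := ⟨σ, hσ⟩) hx hσx, hdec,
    decode_encode_of_notMem (σ := ⟨τ, hτ⟩) (hS ▸ hx) (hS ▸ hτx)]

end DerangementCode

theorem card_derangements_card_cycleType_le (s : ℕ) :
    Fintype.card {σ : Perm α // σ ∈ derangements α ∧ Multiset.card σ.cycleType = s} ≤
      (Fintype.card α).choose s * ((Fintype.card α - s).descFactorial s *
        (Fintype.card α - s).descFactorial (Fintype.card α - 2 * s)) :=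
  DerangementCode.card (α := α) ▸ Fintype.card_le_of_injective _ DerangementCode.encode_injective

end Equiv.Perm

namespace Nat

theorem factorial_mul_choose_mul_descFactorial {n s : ℕ} (h : 2 * s ≤ n) :
    s ! * (n.choose s * ((n - s).descFactorial s * (n - s).descFactorial (n - 2 * s))) =
      n ! * (n - s).choose s := by
  have hlast : s ! * (n - s).descFactorial (n - 2 * s) = (n - s)! := by
    simpa [show n - s - (n - 2 * s) = s by omega] using
      factorial_mul_descFactorial (show n - 2 * s ≤ n - s by omega)
  calc s ! * (n.choose s * ((n - s).descFactorial s * (n - s).descFactorial (n - 2 * s)))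
      = n.descFactorial s * (s ! * (n - s).descFactorial (n - 2 * s)) * (n - s).choose s := by
        rw [descFactorial_eq_factorial_mul_choose n s,
          descFactorial_eq_factorial_mul_choose (n - s) s]
        ring
    _ = n ! * (n - s).choose s := by
        rw [hlast, mul_comm (n.descFactorial s), factorial_mul_descFactorial (by omega)]

theorem two_mul_pow_le_add_one_pow {m : ℕ} (hm : 1 ≤ m) : 2 * m ^ m ≤ (m + 1) ^ m := by
  have := pow_add_mul_le_add_pow (a := m) (b := 1) (Nat.zero_le _) (Nat.zero_le _) m
  rwa [Nat.cast_id, mul_one, ← pow_succ', Nat.succ_eq_add_one, Nat.sub_add_cancel hm,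
    ← two_mul] at this

theorem four_mul_factorial_two_mul_le {m : ℕ} (hm : 6 ≤ m) : 4 * (2 * m)! ≤ m ! * (2 * m) ^ m := by
  induction m, hm using Nat.le_induction with
  | base => decide
  | succ m hm ih =>
    have key : (2 * m + 1) * m ^ m ≤ (m + 1) * (m + 1) ^ m :=
      calc (2 * m + 1) * m ^ m ≤ (2 * m + 2) * m ^ m := Nat.mul_le_mul_right _ (by omega)
        _ = (m + 1) * (2 * m ^ m) := by ring
        _ ≤ (m + 1) * (m + 1) ^ m := by gcongr; exact two_mul_pow_le_add_one_pow (by omega)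
    calc 4 * (2 * (m + 1))! = (2 * m + 2) * (2 * m + 1) * (4 * (2 * m)!) := by
          rw [show 2 * (m + 1) = 2 * m + 1 + 1 by ring, factorial_succ, factorial_succ]; ring
      _ ≤ (2 * m + 2) * (2 * m + 1) * (m ! * (2 * m) ^ m) := by gcongr
      _ = (2 * m + 2) * m ! * 2 ^ m * ((2 * m + 1) * m ^ m) := by rw [mul_pow]; ring
      _ ≤ (2 * m + 2) * m ! * 2 ^ m * ((m + 1) * (m + 1) ^ m) := by gcongr
      _ = (m + 1)! * (2 * (m + 1)) ^ (m + 1) := by rw [factorial_succ, mul_pow]; ring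

theorem factorial_le_factorial_mul_pow {s m : ℕ} (h : s ≤ m) : m ! ≤ s ! * m ^ (m - s) := by
  calc m ! = s ! * (s + 1).ascFactorial (m - s) := by
        rw [factorial_mul_ascFactorial, Nat.add_sub_cancel' h]
    _ ≤ s ! * m ^ (m - s) := by
        gcongr
        simpa [Nat.add_sub_cancel' h] using ascFactorial_le_pow_add s (m - s)

end Nat

open Nat

theorem d2_eq_card_derangements (n s : ℕ) :
    d2 n s = Fintype.card {σ : Equiv.Perm (Fin n) //
      σ ∈ derangements (Fin n) ∧ Multiset.card σ.cycleType = s} := by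
  refine Fintype.card_congr (Equiv.subtypeEquivRight fun σ => ?_)
  have hsupp : #σ.support = n ↔ σ.support = univ := by
    simpa using card_eq_iff_eq_univ σ.support
  rw [Equiv.Perm.sum_cycleType, and_comm, hsupp, eq_univ_iff_forall]
  simp [derangements]

theorem d2_le_choose_mul_descFactorial (n s : ℕ) :
    d2 n s ≤ n.choose s * ((n - s).descFactorial s * (n - s).descFactorial (n - 2 * s)) := by
  simpa [d2_eq_card_derangements] using
    Equiv.Perm.card_derangements_card_cycleType_le (α := Fin n) s

theorem factorial_mul_d2_le {n s : ℕ} (h : 2 * s ≤ n) : s ! * d2 n s ≤ n ! * (n - s).choose s :=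
  factorial_mul_choose_mul_descFactorial h ▸
    Nat.mul_le_mul_left _ (d2_le_choose_mul_descFactorial n s)

theorem four_mul_factorial_mul_choose_le {m s : ℕ} (hm : 2 ≤ m) (hsm : s ≤ m) :
    4 * ((2 * m)! * (2 * m - s).choose s) ≤ s ! * (4 * m) ^ (2 * m - s) := by
  rcases lt_or_ge m 6 with hm6 | hm6
  · interval_cases m <;> interval_cases s <;> decide
  calc 4 * ((2 * m)! * (2 * m - s).choose s) ≤ 4 * (2 * m)! * 2 ^ (2 * m - s) := by
        rw [← mul_assoc]; gcongr; exact choose_le_two_pow _ _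
    _ ≤ m ! * (2 * m) ^ m * 2 ^ (2 * m - s) :=
        Nat.mul_le_mul_right _ (four_mul_factorial_two_mul_le hm6)
    _ ≤ s ! * m ^ (m - s) * (2 * m) ^ m * 2 ^ (2 * m - s) := by
        gcongr; exact factorial_le_factorial_mul_pow hsm
    _ ≤ s ! * (2 * m) ^ (m - s) * (2 * m) ^ m * 2 ^ (2 * m - s) :=
        Nat.mul_le_mul_right _ (Nat.mul_le_mul_right _
          (Nat.mul_le_mul_left _ (Nat.pow_le_pow_left (by omega) _)))
    _ = s ! * (4 * m) ^ (2 * m - s) := by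
        rw [mul_assoc (s !), ← pow_add, show m - s + m = 2 * m - s by omega, mul_assoc,
          ← mul_pow]
        ring

theorem four_mul_d2_two_mul_le {m s : ℕ} (hm : 1 ≤ m) (hsm : s ≤ m) :
    4 * d2 (2 * m) s ≤ (4 * m) ^ (2 * m - s) := by
  obtain rfl | hm2 := hm.eq_or_lt
  · -- `d2_le_choose_mul_descFactorial` only gives `d₂(2,1) ≤ 2` here
    interval_cases s <;> decide
  refine Nat.le_of_mul_le_mul_left ?_ (factorial_pos s)
  calc s ! * (4 * d2 (2 * m) s) = 4 * (s ! * d2 (2 * m) s) := by ring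
    _ ≤ 4 * ((2 * m)! * (2 * m - s).choose s) :=
        Nat.mul_le_mul_left 4 (factorial_mul_d2_le (by omega))
    _ ≤ s ! * (4 * m) ^ (2 * m - s) := four_mul_factorial_mul_choose_le hm2 hsm

theorem sum_Icc_pow_two_mul_sub_le {K : Type*} [Field K] [LinearOrder K] [IsStrictOrderedRing K]
    {x : K} (hx₀ : 0 ≤ x) (hx₁ : x < 1) (m : ℕ) :
    ∑ s ∈ Icc 1 m, x ^ (2 * m - s) ≤ x ^ m / (1 - x) := by
  rw [← Ico_add_one_right_eq_Icc, sum_Ico_reflect _ _ (by omega),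
    show 2 * m + 1 - (m + 1) = m by omega, Nat.add_sub_cancel]
  exact geom_sum_Ico_le_of_lt_one hx₀ hx₁

theorem G2m_eq_sum (m : ℕ) {z : ℝ} (hz : z ≠ 0) :
    G2m m z = ∑ s ∈ Icc 1 m, (d2 (2 * m) s : ℝ) * z⁻¹ ^ (2 * m - s) := by
  rw [G2m, mul_sum]
  refine sum_congr rfl fun s hs => ?_
  rw [show (-(2 * m : ℤ)) = -((2 * m : ℕ) : ℤ) by push_cast; ring, _root_.zpow_neg, zpow_natCast,
    inv_pow, pow_sub₀ z hz (by have := (mem_Icc.1 hs).2; omega), mul_inv, inv_inv]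
  ring

theorem d2_mul_pow_le {m s : ℕ} {w α : ℝ} (hm : 1 ≤ m) (hsm : s ≤ m) (hw : 0 ≤ w)
    (hmw : 4 * m * w ≤ α) : (d2 (2 * m) s : ℝ) * w ^ (2 * m - s) ≤ α ^ (2 * m - s) / 4 := by
  have hd2 : (4 * d2 (2 * m) s : ℝ) ≤ (4 * m) ^ (2 * m - s) := by
    exact_mod_cast four_mul_d2_two_mul_le hm hsm
  rw [le_div_iff₀ four_pos]
  calc (d2 (2 * m) s : ℝ) * w ^ (2 * m - s) * 4 = 4 * d2 (2 * m) s * w ^ (2 * m - s) := by ring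
    _ ≤ (4 * m) ^ (2 * m - s) * w ^ (2 * m - s) := by gcongr
    _ = (4 * m * w) ^ (2 * m - s) := (mul_pow _ _ _).symm
    _ ≤ α ^ (2 * m - s) := by gcongr

/-- For `α ∈ (0,1)`, `z > 0` and `m_z = ⌊αz/4⌋ ≥ 1` one has
`G_{2m_z}(z) ≤ α^{m_z}/(4(1−α))`. -/
theorem G2m_bound (α z : ℝ) (hα : α ∈ Set.Ioo (0 : ℝ) 1) (hz : 0 < z)
    (mz : ℕ) (hmz : mz = Nat.floor (α * z / 4)) (h1 : 1 ≤ mz) :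
    G2m mz z ≤ α ^ mz / (4 * (1 - α)) := by
  obtain ⟨hα₀, hα₁⟩ := hα
  have hmzw : 4 * mz * z⁻¹ ≤ α := by
    have : (mz : ℝ) ≤ α * z / 4 := hmz ▸ Nat.floor_le (by positivity)
    rw [← div_eq_mul_inv, div_le_iff₀ hz]
    linarith
  calc G2m mz z = ∑ s ∈ Icc 1 mz, (d2 (2 * mz) s : ℝ) * z⁻¹ ^ (2 * mz - s) :=
        G2m_eq_sum mz hz.ne'
    _ ≤ ∑ s ∈ Icc 1 mz, α ^ (2 * mz - s) / 4 :=
        sum_le_sum fun s hs => d2_mul_pow_le h1 (mem_Icc.1 hs).2 (by positivity) hmzw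
    _ ≤ α ^ mz / (1 - α) / 4 := by
        rw [← sum_div]
        gcongr
        exact sum_Icc_pow_two_mul_sub_le hα₀.le hα₁ mz
    _ = α ^ mz / (4 * (1 - α)) := by rw [div_div, mul_comm]
end

section
/- Let A ∈ ℂ^{n×N} be a matrix with columns a_1,…,a_N each of ℓ²-norm at most 1, and coherence μ = max_{i≠j} |⟨a_i, a_j⟩|. Let Λ ⊆ {1,…,N} with |Λ| = S, let A_Λ be the column submatrix indexed by Λ, and suppose ‖I_Λ − A_Λ* A_Λ‖ ≤ δ for some δ ∈ (0,1) (spectral norm), so that A_Λ* A_Λ is invertible. Then for every ρ ∉ Λ, ‖(A_Λ* A_Λ)^{−1} A_Λ* a_ρ‖₂ ≤ √S · μ / (1 − δ). -/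
open MeasureTheory Complex Matrix

/-! For the Gram matrix `G = A_Λ* A_Λ`, writing `x = (I - G) x + G x` and using `‖I - G‖ ≤ δ`
gives `(1 - δ) ‖x‖ ≤ ‖G x‖`; so `G` is invertible and `‖G⁻¹ v‖ ≤ ‖v‖ / (1 - δ)`. Since `ρ ∉ Λ`,
every entry `conj ⟨a_λ, a_ρ⟩` of `v = A_Λ* a_ρ` has modulus at most `μ`, so `‖v‖ ≤ √S μ`. -/

noncomputable def coherence {n N : ℕ} (A : Matrix (Fin n) (Fin N) ℂ) : ℝ :=
  ⨆ p : {p : Fin N × Fin N // p.1 ≠ p.2}, ‖dotc (fun i => A i p.val.1) (fun i => A i p.val.2)‖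

lemma coherence_nonneg {n N : ℕ} (A : Matrix (Fin n) (Fin N) ℂ) : 0 ≤ coherence A :=
  Real.iSup_nonneg fun _ => norm_nonneg _

lemma norm_dotc_le_coherence {n N : ℕ} (A : Matrix (Fin n) (Fin N) ℂ) {j k : Fin N}
    (hjk : j ≠ k) : ‖dotc (fun i => A i j) (fun i => A i k)‖ ≤ coherence A :=
  le_ciSup (f := fun p : {p : Fin N × Fin N // p.1 ≠ p.2} =>
      ‖dotc (fun i => A i p.val.1) (fun i => A i p.val.2)‖)
    (Set.finite_range _).bddAbove ⟨(j, k), hjk⟩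

section L2

variable {ι : Type*} [Fintype ι]

lemma l2norm_eq_norm_toLp (z : ι → ℂ) : l2norm z = ‖WithLp.toLp 2 z‖ := by
  simp [l2norm, EuclideanSpace.norm_eq]

lemma l2norm_nonneg (z : ι → ℂ) : 0 ≤ l2norm z :=
  Real.sqrt_nonneg _

lemma l2norm_eq_zero_iff {z : ι → ℂ} : l2norm z = 0 ↔ z = 0 := by
  rw [l2norm_eq_norm_toLp, norm_eq_zero, WithLp.toLp_eq_zero]

lemma l2norm_add_le (u v : ι → ℂ) : l2norm (u + v) ≤ l2norm u + l2norm v := by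
  simpa only [l2norm_eq_norm_toLp, WithLp.toLp_add] using norm_add_le _ _

lemma l2norm_le_sqrt_card_mul {z : ι → ℂ} {c : ℝ} (hc : 0 ≤ c) (hz : ∀ i, ‖z i‖ ≤ c) :
    l2norm z ≤ Real.sqrt (Fintype.card ι) * c := by
  rw [l2norm, ← Real.sqrt_sq hc, ← Real.sqrt_mul (Nat.cast_nonneg _)]
  gcongr
  calc ∑ i, ‖z i‖ ^ 2 ≤ ∑ _i : ι, c ^ 2 := by gcongr with i; exact hz i
    _ = Fintype.card ι * c ^ 2 := by simp

lemma l2norm_mulVec_le {κ : Type*} [Fintype κ] [DecidableEq κ] (M : Matrix ι κ ℂ)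
    (x : κ → ℂ) : l2norm (M *ᵥ x) ≤ specNorm M * l2norm x := by
  rw [l2norm_eq_norm_toLp, l2norm_eq_norm_toLp]
  exact (LinearMap.toContinuousLinearMap (Matrix.toEuclideanLin M)).le_opNorm (WithLp.toLp 2 x)

end L2

section NearIdentity

variable {ι : Type*} [Fintype ι] [DecidableEq ι] {G : Matrix ι ι ℂ} {δ : ℝ}

lemma one_sub_mul_l2norm_le_l2norm_mulVec (hG : specNorm (1 - G) ≤ δ) (x : ι → ℂ) :
    (1 - δ) * l2norm x ≤ l2norm (G *ᵥ x) := by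
  have hsplit : x = (1 - G) *ᵥ x + G *ᵥ x := by
    rw [Matrix.sub_mulVec, Matrix.one_mulVec, sub_add_cancel]
  have htri := l2norm_add_le ((1 - G) *ᵥ x) (G *ᵥ x)
  rw [← hsplit] at htri
  have hcontr : l2norm ((1 - G) *ᵥ x) ≤ δ * l2norm x :=
    (l2norm_mulVec_le _ x).trans (mul_le_mul_of_nonneg_right hG (l2norm_nonneg x))
  linarith

lemma isUnit_det_of_specNorm_one_sub_le (hG : specNorm (1 - G) ≤ δ) (hδ : δ < 1) :
    IsUnit G.det := by
  rw [← Matrix.isUnit_iff_isUnit_det, ← Matrix.mulVec_injective_iff_isUnit]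
  intro x y hxy
  have hbound := one_sub_mul_l2norm_le_l2norm_mulVec hG (x - y)
  rw [Matrix.mulVec_sub, hxy, sub_self, l2norm_eq_zero_iff.mpr rfl] at hbound
  have hzero : l2norm (x - y) = 0 :=
    le_antisymm (nonpos_of_mul_nonpos_right hbound (by linarith)) (l2norm_nonneg _)
  exact sub_eq_zero.mp (l2norm_eq_zero_iff.mp hzero)

lemma l2norm_inv_mulVec_le (hG : specNorm (1 - G) ≤ δ) (hδ : δ < 1) (v : ι → ℂ) :
    l2norm (G⁻¹ *ᵥ v) ≤ l2norm v / (1 - δ) := by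
  have hGinv : G *ᵥ (G⁻¹ *ᵥ v) = v := by
    rw [Matrix.mulVec_mulVec, Matrix.mul_nonsing_inv _ (isUnit_det_of_specNorm_one_sub_le hG hδ),
      Matrix.one_mulVec]
  rw [le_div_iff₀ (by linarith), mul_comm]
  simpa only [hGinv] using one_sub_mul_l2norm_le_l2norm_mulVec hG (G⁻¹ *ᵥ v)

end NearIdentity

lemma conjTranspose_colSub_mulVec_apply {ι κ : Type*} [Fintype ι] (A : Matrix ι κ ℂ)
    (Λ : Finset κ) (k : κ) (j : ↥Λ) :
    ((colSub A Λ)ᴴ *ᵥ fun i => A i k) j = star (dotc (fun i => A i j) (fun i => A i k)) := by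
  simp [Matrix.mulVec, dotProduct, colSub, dotc, mul_comm]

theorem pseudoinverse_column_bound_general (n N : ℕ) (A : Matrix (Fin n) (Fin N) ℂ)
    (μ : ℝ)
    (hμ : μ = ⨆ p : {p : Fin N × Fin N // p.1 ≠ p.2},
        ‖dotc (fun i => A i p.val.1) (fun i => A i p.val.2)‖)
    (Λ : Finset (Fin N)) (S : ℕ) (hΛ : Λ.card = S)
    (δ : ℝ) (hδ : δ ∈ Set.Ioo (0 : ℝ) 1)
    (hnorm : specNorm ((1 : Matrix ↥Λ ↥Λ ℂ) - (colSub A Λ)ᴴ * colSub A Λ) ≤ δ)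
    (ρ : Fin N) (hρ : ρ ∉ Λ) :
    l2norm ((((colSub A Λ)ᴴ * colSub A Λ)⁻¹ * (colSub A Λ)ᴴ).mulVec fun i => A i ρ)
      ≤ Real.sqrt S * μ / (1 - δ) := by
  change μ = coherence A at hμ
  have hentry : ∀ j : ↥Λ, ‖((colSub A Λ)ᴴ *ᵥ fun i => A i ρ) j‖ ≤ μ := fun j => by
    rw [conjTranspose_colSub_mulVec_apply, norm_star, hμ]
    exact norm_dotc_le_coherence A fun h => hρ (h ▸ j.2)
  have hcorr : l2norm ((colSub A Λ)ᴴ *ᵥ fun i => A i ρ) ≤ Real.sqrt S * μ := by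
    simpa only [Fintype.card_coe, hΛ] using
      l2norm_le_sqrt_card_mul (hμ ▸ coherence_nonneg A) hentry
  rw [← Matrix.mulVec_mulVec]
  calc _ ≤ l2norm ((colSub A Λ)ᴴ *ᵥ fun i => A i ρ) / (1 - δ) :=
        l2norm_inv_mulVec_le hnorm hδ.2 _
    _ ≤ Real.sqrt S * μ / (1 - δ) := by
        gcongr
        linarith [hδ.2]

/-- For a matrix `A` with columns of ℓ²-norm at most 1 and coherence
`μ = max_{i≠j} |⟨a_i, a_j⟩|`, if `‖I_Λ − A_Λ* A_Λ‖ ≤ δ` for some `δ ∈ (0,1)`, then for every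
`ρ ∉ Λ`: `‖(A_Λ* A_Λ)^{−1} A_Λ* a_ρ‖₂ ≤ √S μ/(1−δ)` where `S = |Λ|`. -/
theorem pseudoinverse_column_bound (n N : ℕ) (A : Matrix (Fin n) (Fin N) ℂ)
    (hcols : ∀ j, l2norm (fun i => A i j) ≤ 1)
    (μ : ℝ)
    (hμ : μ = ⨆ p : {p : Fin N × Fin N // p.1 ≠ p.2},
        ‖dotc (fun i => A i p.val.1) (fun i => A i p.val.2)‖)
    (Λ : Finset (Fin N)) (S : ℕ) (hΛ : Λ.card = S)
    (δ : ℝ) (hδ : δ ∈ Set.Ioo (0 : ℝ) 1)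
    (hnorm : specNorm ((1 : Matrix ↥Λ ↥Λ ℂ) - (colSub A Λ)ᴴ * colSub A Λ) ≤ δ)
    (ρ : Fin N) (hρ : ρ ∉ Λ) :
    l2norm ((((colSub A Λ)ᴴ * colSub A Λ)⁻¹ * (colSub A Λ)ᴴ).mulVec fun i => A i ρ)
      ≤ Real.sqrt S * μ / (1 - δ) :=
  pseudoinverse_column_bound_general n N A μ hμ Λ S hΛ δ hδ hnorm ρ hρ
end
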